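/- Let G be an Artin group with all labels m_{ij} ≥ 7, let X be its coned-off Cayley graph with respect to the parabolic subgroups G_{ij} with m_{ij} < ∞, and let α be a geodesic in X between two vertices of G. If α is decomposed into maximal Γ-blocks and cone-blocks α₁⋯α_t, and α_{k-1}, α_k, α_{k+1} are three consecutive cone-blocks with labels v_{k-1} ∈ G_{ij}, v_k ∈ G_{js}, v_{k+1} ∈ G_{sq}, such that the first syllable of v_k is a power of a_j and the last syllable of v_k is a power of a_s, then the syllable length of v_k is at least 3. -/

import Mathlib

/-- Vertices of the coned-off Cayley graph `Γ̂_A(G; H)`: the elements of `G`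
(vertices of the Cayley graph) together with one cone vertex `v(gHᵢ)` for each
coset of each subgroup `Hᵢ`. -/
inductive ConedVert (G : Type*) [Group G] {ι : Type*} (H : ι → Subgroup G) : Type _
  | grp : G → ConedVert G H
  | cone : (i : ι) → G ⧸ H i → ConedVert G H

/-- Adjacency in the coned-off Cayley graph: Cayley-graph edges between group
elements differing by a generator in `A`, and cone edges between a cone vertex
`v(gHᵢ)` and the elements of the coset `gHᵢ`. -/
def conedAdj {G : Type*} [Group G] {ι : Type*} (A : Set G) (H : ι → Subgroup G) :
    ConedVert G H → ConedVert G H → Prop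
  | .grp g, .grp g' => ∃ a ∈ A, g' = g * a ∨ g = g' * a
  | .grp g, .cone i c => (QuotientGroup.mk g : G ⧸ H i) = c
  | .cone i c, .grp g => (QuotientGroup.mk g : G ⧸ H i) = c
  | .cone _ _, .cone _ _ => False

/-- Edge lengths in the coned-off Cayley graph: Cayley edges have length `1`,
cone edges have length `1/2`. -/
noncomputable def conedWt {G : Type*} [Group G] {ι : Type*} (H : ι → Subgroup G) :
    ConedVert G H → ConedVert G H → ℝ
  | .grp _, .grp _ => 1
  | _, _ => 1 / 2

/-- The length of an edge path, given edge lengths `w`. -/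
noncomputable def pathCost {V : Type*} (w : V → V → ℝ) : List V → ℝ
  | x :: y :: l => w x y + pathCost w (y :: l)
  | _ => 0

/-- `p` is an edge path from `x` to `y` for the adjacency relation `Adj`. -/
def IsPathFrom {V : Type*} (Adj : V → V → Prop) (p : List V) (x y : V) : Prop :=
  p.head? = some x ∧ p.getLast? = some y ∧ p.Chain' Adj

/-- The path metric of the coned-off Cayley graph `Γ̂_A(G; H)`: the infimum of the
lengths of edge paths joining two vertices. -/
noncomputable def conedDist {G : Type*} [Group G] {ι : Type*} (A : Set G)
    (H : ι → Subgroup G) (x y : ConedVert G H) : ℝ :=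
  sInf { c | ∃ p, IsPathFrom (conedAdj A H) p x y ∧ pathCost (conedWt H) p = c }

/-- A distance function is Gromov-hyperbolic if it satisfies the four-point
condition: `d(x,y) + d(z,w) ≤ max (d(x,z) + d(y,w)) (d(x,w) + d(y,z)) + δ`. -/
def IsGromovHyperbolicDist {V : Type*} (d : V → V → ℝ) : Prop :=
  ∃ δ : ℝ, 0 ≤ δ ∧ ∀ x y z w, d x y + d z w ≤ max (d x z + d y w) (d x w + d y z) + δ

/-- The alternating word `x y x y ⋯` with `m` letters, in the free group. -/
def altWord {σ : Type*} (x y : σ) : ℕ → FreeGroup σ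
  | 0 => 1
  | m + 1 => FreeGroup.of x * altWord y x m

/-- The defining relators `u_{ij} u_{ji}⁻¹` of the Artin group with Coxeter-type
labels `M : Fin n → Fin n → ℕ∞` (relations with `M i j = ∞` are omitted). -/
def artinRels (n : ℕ) (M : Fin n → Fin n → ℕ∞) : Set (FreeGroup (Fin n)) :=
  { r | ∃ i j : Fin n, i ≠ j ∧ ∃ m : ℕ, M i j = (m : ℕ∞) ∧
      r = altWord i j m * (altWord j i m)⁻¹ }

/-- The quotient map from the free group onto the Artin group with labels `M`. -/
def artinMk (n : ℕ) (M : Fin n → Fin n → ℕ∞) :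
    FreeGroup (Fin n) →* PresentedGroup (artinRels n M) :=
  PresentedGroup.mk _

/-- The index type of the non-free two-generator parabolic subgroups: pairs
`i < j` with `m_{ij} < ∞`. -/
def FinitePairs (n : ℕ) (M : Fin n → Fin n → ℕ∞) : Type :=
  { p : Fin n × Fin n // p.1 < p.2 ∧ M p.1 p.2 ≠ ⊤ }

/-- The parabolic subgroup `G_{ij} = ⟨a_i, a_j⟩` for a pair with `m_{ij} < ∞`. -/
def parabolic (n : ℕ) (M : Fin n → Fin n → ℕ∞) (p : FinitePairs n M) :
    Subgroup (PresentedGroup (artinRels n M)) :=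
  Subgroup.closure {artinMk n M (FreeGroup.of p.1.1), artinMk n M (FreeGroup.of p.1.2)}

/-- The syllable length `‖w‖`: the number of maximal blocks of the form `a^n`
in the reduced word representing `w`. -/
def syll {σ : Type*} [DecidableEq σ] (w : FreeGroup σ) : ℕ :=
  ((w.toWord.map Prod.fst).destutter (· ≠ ·)).length

/-!
If `‖v‖ ≤ 2`, then `v` is a power of `a_j` followed by a power of `a_s`, say `v = a_j^m a_s^k`.
Absorbing `a_j^m` into `g₁ ∈ G_{ij}` and `a_s^k` into `g₃ ∈ G_{sq}` writes `g₁ g₂ g₃` as a product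
of an element of `G_{ij}` and one of `G_{sq}`, so `1` and `g₁ g₂ g₃` are joined through two cone
vertices by a path of length `2`, contradicting that their distance is `3`.
-/

namespace List

variable {α : Type*} [DecidableEq α] {a b : α} {l : List α}

theorem eq_of_mem_of_length_destutter'_ne_le_one (h : (l.destutter' (· ≠ ·) a).length ≤ 1)
    {x : α} (hx : x ∈ l) : x = a := by
  by_contra hxa
  have hchain : [a, x].IsChain (· ≠ ·) := by simp [Ne.symm hxa]
  have := hchain.length_le_length_destutter_ne ((singleton_sublist.2 hx).cons_cons a)
  rw [destutter_cons'] at this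
  simp only [length_cons, length_nil] at this
  omega

theorem exists_eq_append_of_length_destutter_ne_le_two
    (h : (l.destutter (· ≠ ·)).length ≤ 2) (ha : l.head? = some a) (hb : l.getLast? = some b) :
    ∃ l₁ l₂, l = l₁ ++ l₂ ∧ (∀ x ∈ l₁, x = a) ∧ ∀ x ∈ l₂, x = b := by
  obtain ⟨t, rfl⟩ : ∃ t, l = a :: t := by
    cases l with
    | nil => simp at ha
    | cons c t => exact ⟨t, by simpa using ha⟩
  clear ha
  induction t with
  | nil =>
    obtain rfl : a = b := by simpa using hb
    exact ⟨[a], [], by simp⟩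
  | cons c t ih =>
    by_cases hca : c = a
    · subst hca
      rw [destutter_cons_cons, if_neg (by simp)] at h
      obtain ⟨l₁, l₂, heq, h₁, h₂⟩ := ih h hb
      exact ⟨c :: l₁, l₂, by rw [heq, cons_append], forall_mem_cons.2 ⟨rfl, h₁⟩, h₂⟩
    · rw [destutter_cons_cons, if_pos (Ne.symm hca), length_cons] at h
      have hct : ∀ x ∈ c :: t, x = c :=
        forall_mem_cons.2 ⟨rfl, fun x hx => eq_of_mem_of_length_destutter'_ne_le_one (by omega) hx⟩
      have hbc : b = c := hct b (mem_of_getLast? (by simpa using hb))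
      exact ⟨[a], c :: t, rfl, by simp, fun x hx => (hct x hx).trans hbc.symm⟩

end List

theorem exists_toWord_eq_append_of_syll_le_two {σ : Type*} [DecidableEq σ] {w : FreeGroup σ}
    {a b : σ} (h : syll w ≤ 2) (ha : w.toWord.head?.map Prod.fst = some a)
    (hb : w.toWord.getLast?.map Prod.fst = some b) :
    ∃ W₁ W₂, w.toWord = W₁ ++ W₂ ∧ (∀ x ∈ W₁, x.1 = a) ∧ ∀ x ∈ W₂, x.1 = b := by
  obtain ⟨K₁, K₂, hK, h₁, h₂⟩ := List.exists_eq_append_of_length_destutter_ne_le_two h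
    (by rwa [List.head?_map]) (by rwa [List.getLast?_map])
  obtain ⟨W₁, W₂, hW, rfl, rfl⟩ := List.map_eq_append_iff.1 hK
  exact ⟨W₁, W₂, hW, List.forall_mem_map.1 h₁, List.forall_mem_map.1 h₂⟩

theorem FreeGroup.map_mk_mem_zpowers {σ G : Type*} [Group G] (f : FreeGroup σ →* G) {a : σ}
    {L : List (σ × Bool)} (hL : ∀ x ∈ L, x.1 = a) : f (mk L) ∈ Subgroup.zpowers (f (of a)) := by
  rw [← lift.apply_symm_apply f, lift_mk]
  refine Subgroup.list_prod_mem _ fun y hy => ?_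
  obtain ⟨⟨x, _ | _⟩, hx, rfl⟩ := List.mem_map.1 hy
  all_goals
    obtain rfl : x = a := hL _ hx
    simp [Subgroup.mem_zpowers]

theorem pathCost_nonneg {V : Type*} {w : V → V → ℝ} (hw : ∀ x y, 0 ≤ w x y) :
    ∀ p : List V, 0 ≤ pathCost w p
  | x :: y :: l => add_nonneg (hw x y) (pathCost_nonneg hw (y :: l))
  | [] | [_] => le_rfl

section ConedOff

variable {G ι : Type*} [Group G] (A : Set G) (H : ι → Subgroup G)

theorem conedWt_nonneg (x y : ConedVert G H) : 0 ≤ conedWt H x y := by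
  cases x <;> cases y <;> norm_num [conedWt]

theorem conedDist_le_pathCost {x y : ConedVert G H} {p : List (ConedVert G H)}
    (hp : IsPathFrom (conedAdj A H) p x y) : conedDist A H x y ≤ pathCost (conedWt H) p :=
  csInf_le ⟨0, by rintro _ ⟨p, -, rfl⟩; exact pathCost_nonneg (conedWt_nonneg H) p⟩ ⟨p, hp, rfl⟩

theorem conedDist_one_mul_le_two {i₁ i₂ : ι} {g h : G} (hg : g ∈ H i₁) (hh : h ∈ H i₂) :
    conedDist A H (.grp 1) (.grp (g * h)) ≤ 2 := by
  have hpath : IsPathFrom (conedAdj A H)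
      [.grp 1, .cone i₁ (QuotientGroup.mk 1), .grp g, .cone i₂ (QuotientGroup.mk g), .grp (g * h)]
      (.grp 1) (.grp (g * h)) := by
    refine ⟨rfl, rfl, .cons_cons rfl (.cons_cons ?_ (.cons_cons rfl (.cons_cons ?_ (.singleton _))))⟩
    · show (QuotientGroup.mk g : G ⧸ H i₁) = QuotientGroup.mk 1
      exact QuotientGroup.eq.2 (by simpa using hg)
    · show (QuotientGroup.mk (g * h) : G ⧸ H i₂) = QuotientGroup.mk g
      exact QuotientGroup.eq.2 (by simpa [mul_assoc] using hh)
  refine (conedDist_le_pathCost A H hpath).trans_eq ?_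
  norm_num [pathCost, conedWt]

end ConedOff

theorem exists_parabolic_eq {n : ℕ} {M : Fin n → Fin n → ℕ∞} (hsym : ∀ i j, M i j = M j i)
    {i j : Fin n} (hij : i ≠ j) (hfij : M i j ≠ ⊤) :
    ∃ p, parabolic n M p =
      Subgroup.closure {artinMk n M (FreeGroup.of i), artinMk n M (FreeGroup.of j)} := by
  rcases hij.lt_or_gt with h | h
  · exact ⟨⟨(i, j), h, hfij⟩, rfl⟩
  · exact ⟨⟨(j, i), h, hsym i j ▸ hfij⟩, by simp [parabolic, Set.pair_comm]⟩

theorem cone_block_syllable_ge_three_general (n : ℕ) (M : Fin n → Fin n → ℕ∞)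
    (hsym : ∀ i' j', M i' j' = M j' i')
    (i j s q : Fin n) (hij : i ≠ j) (hsq : s ≠ q)
    (hfij : M i j ≠ ⊤) (hfsq : M s q ≠ ⊤)
    (g₁ g₂ g₃ : PresentedGroup (artinRels n M))
    (hg₁ : g₁ ∈ Subgroup.closure {artinMk n M (FreeGroup.of i), artinMk n M (FreeGroup.of j)})
    (hg₃ : g₃ ∈ Subgroup.closure {artinMk n M (FreeGroup.of s), artinMk n M (FreeGroup.of q)})
    (hgeo : conedDist (Set.range fun l => artinMk n M (FreeGroup.of l)) (parabolic n M)
      (.grp 1) (.grp (g₁ * g₂ * g₃)) = 3)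
    (v : FreeGroup (Fin n)) (hv : artinMk n M v = g₂)
    (hfirst : v.toWord.head?.map Prod.fst = some j)
    (hlast : v.toWord.getLast?.map Prod.fst = some s) :
    3 ≤ syll v := by
  by_contra! hlt
  obtain ⟨W₁, W₂, hW, hW₁, hW₂⟩ := exists_toWord_eq_append_of_syll_le_two (by omega) hfirst hlast
  obtain ⟨p₁, hp₁⟩ := exists_parabolic_eq hsym hij hfij
  obtain ⟨p₂, hp₂⟩ := exists_parabolic_eq hsym hsq hfsq
  set P₁ := artinMk n M (FreeGroup.mk W₁)
  set P₂ := artinMk n M (FreeGroup.mk W₂)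
  have hg₂ : g₂ = P₁ * P₂ := by
    rw [← map_mul, FreeGroup.mul_mk, ← hW, FreeGroup.mk_toWord, hv]
  have hP₁ : g₁ * P₁ ∈ parabolic n M p₁ := hp₁ ▸ mul_mem hg₁
    (Subgroup.zpowers_le.2 (Subgroup.subset_closure (by simp))
      (FreeGroup.map_mk_mem_zpowers _ hW₁))
  have hP₂ : P₂ * g₃ ∈ parabolic n M p₂ := hp₂ ▸ mul_mem
    (Subgroup.zpowers_le.2 (Subgroup.subset_closure (by simp))
      (FreeGroup.map_mk_mem_zpowers _ hW₂)) hg₃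
  have hle := conedDist_one_mul_le_two (Set.range fun l => artinMk n M (FreeGroup.of l)) _ hP₁ hP₂
  rw [hg₂] at hgeo
  simp only [mul_assoc] at hgeo hle
  linarith

/-- Let `G` be an Artin group with all labels `m_{ij} ≥ 7` and `X` its coned-off
Cayley graph.  Suppose three consecutive cone-blocks of a geodesic of `X` join `1`
to `g₁ g₂ g₃` (so the distance from `1` to `g₁ g₂ g₃` in `X` is `3`), with
`g₁ ∈ G_{ij}`, `g₂ ∈ G_{js}`, `g₃ ∈ G_{sq}` all nontrivial and consecutive pairs
of indices distinct.  If `v` is a freely reduced word in `{a_j, a_s}` of minimal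
syllable length representing `g₂` whose first syllable is a power of `a_j` and
whose last syllable is a power of `a_s`, then `‖v‖ ≥ 3`. -/
theorem cone_block_syllable_ge_three (n : ℕ) (M : Fin n → Fin n → ℕ∞)
    (hsym : ∀ i' j', M i' j' = M j' i') (hM : ∀ i' j', i' ≠ j' → 7 ≤ M i' j')
    (i j s q : Fin n) (hij : i ≠ j) (hjs : j ≠ s) (hsq : s ≠ q)
    (hpair₁ : ({i, j} : Set (Fin n)) ≠ {j, s}) (hpair₂ : ({j, s} : Set (Fin n)) ≠ {s, q})
    (hfij : M i j ≠ ⊤) (hfjs : M j s ≠ ⊤) (hfsq : M s q ≠ ⊤)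
    (g₁ g₂ g₃ : PresentedGroup (artinRels n M))
    (hg₁ : g₁ ∈ Subgroup.closure {artinMk n M (FreeGroup.of i), artinMk n M (FreeGroup.of j)})
    (hg₂ : g₂ ∈ Subgroup.closure {artinMk n M (FreeGroup.of j), artinMk n M (FreeGroup.of s)})
    (hg₃ : g₃ ∈ Subgroup.closure {artinMk n M (FreeGroup.of s), artinMk n M (FreeGroup.of q)})
    (hg₁' : g₁ ≠ 1) (hg₂' : g₂ ≠ 1) (hg₃' : g₃ ≠ 1)
    (hgeo : conedDist (Set.range fun l => artinMk n M (FreeGroup.of l)) (parabolic n M)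
      (.grp 1) (.grp (g₁ * g₂ * g₃)) = 3)
    (v : FreeGroup (Fin n)) (hv : artinMk n M v = g₂)
    (hletters : ∀ l ∈ v.toWord, l.1 = j ∨ l.1 = s)
    (hmin : ∀ w : FreeGroup (Fin n), artinMk n M w = g₂ →
      (∀ l ∈ w.toWord, l.1 = j ∨ l.1 = s) → syll v ≤ syll w)
    (hfirst : v.toWord.head?.map Prod.fst = some j)
    (hlast : v.toWord.getLast?.map Prod.fst = some s) :
    3 ≤ syll v :=
  cone_block_syllable_ge_three_general n M hsym i j s q hij hsq hfij hfsq g₁ g₂ g₃ hg₁ hg₃ hgeo v hv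
    hfirst hlast
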